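/- For every C > 0 and every x ∈ ℝ, one has (φ(x+C) − φ(x−C))² / (Φ(x+C) − Φ(x−C)) ≤ 1/2. -/

import Mathlib

/-!
Since `(φ²)' = -2tφ²` and `|t| φ(t) ≤ φ(1) = e^{-1/2}/√(2π) < 1/4`, the derivative of `φ²` is
bounded by `φ/2`, so `|φ(b)² - φ(a)²| ≤ |Φ(b) - Φ(a)| / 2` for all `a, b`. As `(p - q)² ≤ |p² - q²|`
for `p, q ≥ 0`, the numerator is at most half the absolute value of the denominator.
-/

open MeasureTheory

/-- The standard normal density. -/
noncomputable def gaussPdf (x : ℝ) : ℝ :=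
  (Real.sqrt (2 * Real.pi))⁻¹ * Real.exp (-(x ^ 2) / 2)

/-- The standard normal CDF. -/
noncomputable def gaussCdf (x : ℝ) : ℝ :=
  ∫ t in Set.Iic x, gaussPdf t

open Real

lemma sq_sub_le_abs_sq_sub {p q : ℝ} (hp : 0 ≤ p) (hq : 0 ≤ q) : (p - q) ^ 2 ≤ |p ^ 2 - q ^ 2| := by
  have hpq : |p - q| ≤ p + q := abs_le.mpr ⟨by linarith, by linarith⟩
  calc (p - q) ^ 2 = |p - q| * |p - q| := by rw [← sq, sq_abs]
    _ ≤ |p - q| * (p + q) := mul_le_mul_of_nonneg_left hpq (abs_nonneg _)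
    _ = |p ^ 2 - q ^ 2| := by rw [sq_sub_sq, mul_comm, abs_mul, abs_of_nonneg (add_nonneg hp hq)]

lemma abs_mul_exp_neg_sq_div_two_le (t : ℝ) : |t| * exp (-(t ^ 2) / 2) ≤ exp (-1 / 2) := by
  have h : |t| ≤ exp ((t ^ 2 - 1) / 2) := by
    nlinarith [add_one_le_exp ((t ^ 2 - 1) / 2), sq_abs t, sq_nonneg (|t| - 1)]
  calc |t| * exp (-(t ^ 2) / 2) ≤ exp ((t ^ 2 - 1) / 2) * exp (-(t ^ 2) / 2) := by gcongr
    _ = exp (-1 / 2) := by rw [← exp_add]; ring_nf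

lemma exp_neg_half_le_sqrt_two_pi_div_four : exp (-1 / 2) ≤ sqrt (2 * π) / 4 := by
  have hsq : exp (-1 / 2) ^ 2 = (exp 1)⁻¹ := by rw [← exp_nat_mul, ← exp_neg]; norm_num
  have h : (4 * exp (-1 / 2)) ^ 2 ≤ 2 * π := by
    rw [mul_pow, hsq, ← div_eq_mul_inv, div_le_iff₀ (exp_pos 1)]
    nlinarith [exp_one_gt_d9, pi_gt_d6]
  have := le_sqrt_of_sq_le h
  linarith

lemma gaussPdf_pos (t : ℝ) : 0 < gaussPdf t := by
  unfold gaussPdf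
  positivity

lemma continuous_gaussPdf : Continuous gaussPdf := by
  unfold gaussPdf
  fun_prop

lemma integrable_gaussPdf : Integrable gaussPdf := by
  refine ((integrable_exp_neg_mul_sq (b := 1 / 2) (by norm_num)).const_mul
    (sqrt (2 * π))⁻¹).congr (Filter.Eventually.of_forall fun t => ?_)
  rw [gaussPdf]
  ring_nf

lemma gaussCdf_sub_gaussCdf (a b : ℝ) : gaussCdf b - gaussCdf a = ∫ t in a..b, gaussPdf t :=
  intervalIntegral.integral_Iic_sub_Iic integrable_gaussPdf.integrableOn
    integrable_gaussPdf.integrableOn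

lemma abs_mul_gaussPdf_le (t : ℝ) : |t| * gaussPdf t ≤ 1 / 4 := by
  calc |t| * gaussPdf t = (|t| * exp (-(t ^ 2) / 2)) / sqrt (2 * π) := by
        rw [gaussPdf]; ring
    _ ≤ (sqrt (2 * π) / 4) / sqrt (2 * π) := by
        gcongr
        exact (abs_mul_exp_neg_sq_div_two_le t).trans exp_neg_half_le_sqrt_two_pi_div_four
    _ = 1 / 4 := by field_simp

lemma hasDerivAt_gaussPdf (t : ℝ) : HasDerivAt gaussPdf (-t * gaussPdf t) t :=
  ((((hasDerivAt_pow 2 t).fun_neg.div_const 2).exp).const_mul (sqrt (2 * π))⁻¹).congr_deriv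
    (by unfold gaussPdf; ring)

lemma hasDerivAt_gaussPdf_sq (t : ℝ) :
    HasDerivAt (fun t => gaussPdf t ^ 2) (-2 * t * gaussPdf t ^ 2) t :=
  ((hasDerivAt_gaussPdf t).fun_pow 2).congr_deriv (by push_cast; ring)

lemma abs_neg_two_mul_gaussPdf_sq_le (t : ℝ) : |-2 * t * gaussPdf t ^ 2| ≤ gaussPdf t / 2 := by
  have hp := gaussPdf_pos t
  calc |-2 * t * gaussPdf t ^ 2| = 2 * (|t| * gaussPdf t) * gaussPdf t := by
        rw [abs_mul, abs_mul, abs_neg, abs_two, abs_of_pos (pow_pos hp 2)]; ring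
    _ ≤ 2 * (1 / 4) * gaussPdf t := by gcongr; exact abs_mul_gaussPdf_le t
    _ = gaussPdf t / 2 := by ring

lemma abs_gaussPdf_sq_sub_le (a b : ℝ) :
    |gaussPdf b ^ 2 - gaussPdf a ^ 2| ≤ |gaussCdf b - gaussCdf a| / 2 := by
  have hcont : Continuous fun t : ℝ => -2 * t * gaussPdf t ^ 2 := by
    have := continuous_gaussPdf
    fun_prop
  calc |gaussPdf b ^ 2 - gaussPdf a ^ 2| = ‖∫ t in a..b, -2 * t * gaussPdf t ^ 2‖ := by
        rw [intervalIntegral.integral_eq_sub_of_hasDerivAt (fun t _ => hasDerivAt_gaussPdf_sq t)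
          (hcont.intervalIntegrable a b), Real.norm_eq_abs]
    _ ≤ |∫ t in a..b, gaussPdf t / 2| :=
        intervalIntegral.norm_integral_le_abs_of_norm_le
          (Filter.Eventually.of_forall fun t => abs_neg_two_mul_gaussPdf_sq_le t)
          ((continuous_gaussPdf.div_const 2).intervalIntegrable a b)
    _ = |gaussCdf b - gaussCdf a| / 2 := by
        rw [intervalIntegral.integral_div, gaussCdf_sub_gaussCdf, abs_div, abs_two]

theorem gauss_ratio_le_half_general (C x : ℝ) :
    (gaussPdf (x + C) - gaussPdf (x - C)) ^ 2 /
      (gaussCdf (x + C) - gaussCdf (x - C)) ≤ 1 / 2 := by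
  have hnum : (gaussPdf (x + C) - gaussPdf (x - C)) ^ 2 ≤
      |gaussCdf (x + C) - gaussCdf (x - C)| / 2 :=
    (sq_sub_le_abs_sq_sub (gaussPdf_pos _).le (gaussPdf_pos _).le).trans
      (abs_gaussPdf_sq_sub_le _ _)
  rcases le_or_gt (gaussCdf (x + C) - gaussCdf (x - C)) 0 with hD | hD
  · exact (div_nonpos_of_nonneg_of_nonpos (sq_nonneg _) hD).trans (by norm_num)
  · rw [abs_of_pos hD] at hnum
    rw [div_le_iff₀ hD]
    linarith

/-- For every `C > 0` and every `x ∈ ℝ`,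
`(φ(x+C) − φ(x−C))² / (Φ(x+C) − Φ(x−C)) ≤ 1/2`. -/
theorem gauss_ratio_le_half (C x : ℝ) (hC : 0 < C) :
    (gaussPdf (x + C) - gaussPdf (x - C)) ^ 2 /
      (gaussCdf (x + C) - gaussCdf (x - C)) ≤ 1 / 2 :=
  gauss_ratio_le_half_general C x
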